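/- With the same setup, tr(r_3 r_2 r_1) = t_1 + t_2 + t_3 + w + x + y + q, where q = u_13 u_32 u_21. -/
import Mathlib

open Matrix

set_option maxHeartbeats 2000000 in
theorem stmt7 (u : Fin 3 → Fin 3 → ℂ) (t : Fin 3 → ℂ)
    (r : Fin 3 → Matrix (Fin 3) (Fin 3) ℂ)
    (hr : ∀ i, r i = 1 + vecMulVec (Pi.single i 1) (u i))
    (ht : ∀ i, t i = 1 + u i i) :
    (r 2 * r 1 * r 0).trace
      = t 0 + t 1 + t 2
        + u 0 1 * u 1 0 + u 0 2 * u 2 0 + u 1 2 * u 2 1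
        + u 0 2 * u 2 1 * u 1 0 := by
  simp only [hr, ht, trace_fin_three, mul_apply, Fin.sum_univ_three,
    vecMulVec_apply, Matrix.add_apply, Matrix.one_apply, Pi.single_apply]
  norm_num [Fin.ext_iff]
  ring
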